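/- arXiv:1806.04642 — 7 statements merged into one kernel-verified Lean document; each statement's English description precedes it below -/
import Mathlib

section
/- For any sequence of decisions x_1,...,x_N in a set X and loss functions l_1,...,l_N, the regret sum_{n=1}^N l_n(x_n) - min_{x in X} sum_{n=1}^N l_n(x) is at most sum_{n=1}^N (l_{1:n}(x_n) - l_{1:n}(x_n^*)), where l_{1:n} = sum_{m=1}^n l_m and x_n^* is a minimizer of l_{1:n} over X. -/
open Finset

/-- Strong FTL Lemma. -/
theorem strong_ftl_lemma {X : Type*} (N : ℕ) (hN : 1 ≤ N)
    (x xstar : ℕ → X) (l : ℕ → X → ℝ)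
    (hmin : ∀ n ∈ Icc 1 N, ∀ y : X,
      (∑ m ∈ Icc 1 n, l m (xstar n)) ≤ ∑ m ∈ Icc 1 n, l m y) :
    (∑ n ∈ Icc 1 N, l n (x n)) - (∑ n ∈ Icc 1 N, l n (xstar N)) ≤
      ∑ n ∈ Icc 1 N,
        ((∑ m ∈ Icc 1 n, l m (x n)) - ∑ m ∈ Icc 1 n, l m (xstar n)) := by
  induction N, hN using Nat.le_induction with
  | base => simp
  | succ N hN ih =>
    have hmin' : ∀ n ∈ Icc 1 N, ∀ y : X,
        (∑ m ∈ Icc 1 n, l m (xstar n)) ≤ ∑ m ∈ Icc 1 n, l m y := by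
      intro n hn y
      exact hmin n (Icc_subset_Icc_right (Nat.le_succ N) hn) y
    have IH := ih hmin'
    have key : (∑ m ∈ Icc 1 N, l m (xstar N)) ≤ ∑ m ∈ Icc 1 N, l m (x (N + 1)) :=
      hmin' N (by simp [hN]) _
    rw [Finset.sum_Icc_succ_top (by omega : 1 ≤ N + 1),
        Finset.sum_Icc_succ_top (by omega : 1 ≤ N + 1),
        Finset.sum_Icc_succ_top (by omega : 1 ≤ N + 1)]
    have expand : (∑ m ∈ Icc 1 (N + 1), l m (x (N + 1)))
        = (∑ m ∈ Icc 1 N, l m (x (N + 1))) + l (N + 1) (x (N + 1)) :=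
      Finset.sum_Icc_succ_top (by omega) _
    have expand2 : (∑ m ∈ Icc 1 (N + 1), l m (xstar (N + 1)))
        = (∑ m ∈ Icc 1 N, l m (xstar (N + 1))) + l (N + 1) (xstar (N + 1)) :=
      Finset.sum_Icc_succ_top (by omega) _
    linarith
end

section
/- For any sequence of decisions x_1,...,x_N and loss functions l_1,...,l_N, the regret satisfies: regret = sum_{n=1}^N [l_{1:n}(x_n) - l_{1:n}(x_n^*) - Delta_n], where Delta_{n+1} := l_{1:n}(x_{n+1}) - l_{1:n}(x_n^*) >= 0 and Delta_1 := 0. -/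
open Finset

/-- Stronger FTL Lemma. -/
theorem stronger_ftl_lemma {X : Type*} (N : ℕ) (hN : 1 ≤ N)
    (x xstar : ℕ → X) (l : ℕ → X → ℝ) (Δ : ℕ → ℝ)
    (hmin : ∀ n ∈ Icc 1 N, ∀ y : X,
      (∑ m ∈ Icc 1 n, l m (xstar n)) ≤ ∑ m ∈ Icc 1 n, l m y)
    (hΔ1 : Δ 1 = 0)
    (hΔ : ∀ n, 1 ≤ n →
      Δ (n + 1) = (∑ m ∈ Icc 1 n, l m (x (n + 1))) - ∑ m ∈ Icc 1 n, l m (xstar n)) :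
    ((∑ n ∈ Icc 1 N, l n (x n)) - (∑ n ∈ Icc 1 N, l n (xstar N)) =
      ∑ n ∈ Icc 1 N,
        ((∑ m ∈ Icc 1 n, l m (x n)) - (∑ m ∈ Icc 1 n, l m (xstar n)) - Δ n)) ∧
    (∀ n, 1 ≤ n → n ≤ N → 0 ≤ Δ (n + 1)) := by
  constructor
  · clear hmin
    induction N, hN using Nat.le_induction with
    | base => simp [hΔ1]
    | succ n hn ih =>
      rw [Finset.sum_Icc_succ_top (by omega : 1 ≤ n + 1),
        Finset.sum_Icc_succ_top (by omega : 1 ≤ n + 1),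
        Finset.sum_Icc_succ_top (by omega : 1 ≤ n + 1),
        Finset.sum_Icc_succ_top (by omega : 1 ≤ n + 1),
        hΔ n hn,
        Finset.sum_Icc_succ_top (by omega : 1 ≤ n + 1)]
      linarith [ih]
  · intro n h1 hn
    rw [hΔ n h1]
    linarith [hmin n (mem_Icc.mpr ⟨h1, hn⟩) (x (n + 1))]
end

section
/- Let X be a compact convex subset of a real inner product space, f and g convex functions on X with f+g mu-strongly convex for some mu > 0. Let x_1 be a minimizer of f over X and x_2 the minimizer of f+g over X. Then ||x_1 - x_2|| <= ||grad g(x_1)|| / mu. -/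
open RealInnerProductSpace

/-- Difference between constrained minimizers of `f` and `f + g`. -/
theorem dist_argmin_le {E : Type*} [NormedAddCommGroup E] [InnerProductSpace ℝ E]
    (X : Set E) (hXc : IsCompact X) (hXconv : Convex ℝ X)
    (f g : E → ℝ) (f' g' : E → E) (μ : ℝ) (hμ : 0 < μ)
    (hconvf : ConvexOn ℝ X f) (hconvg : ConvexOn ℝ X g)
    (hstrong : ∀ x ∈ X, ∀ y ∈ X,
      f x + g x + ⟪f' x + g' x, y - x⟫ + μ / 2 * ‖y - x‖ ^ 2 ≤ f y + g y)
    (x₁ x₂ : E) (hx₁ : x₁ ∈ X) (hx₂ : x₂ ∈ X)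
    (hmin₁ : ∀ y ∈ X, f x₁ ≤ f y)
    (hopt₁ : ∀ y ∈ X, 0 ≤ ⟪f' x₁, y - x₁⟫)
    (hmin₂ : ∀ y ∈ X, f x₂ + g x₂ ≤ f y + g y)
    (hopt₂ : ∀ y ∈ X, 0 ≤ ⟪f' x₂ + g' x₂, y - x₂⟫) :
    ‖x₁ - x₂‖ ≤ ‖g' x₁‖ / μ := by
  have h1 := hstrong x₁ hx₁ x₂ hx₂
  have h2 := hstrong x₂ hx₂ x₁ hx₁
  have h3 := hopt₁ x₂ hx₂
  have h4 := hopt₂ x₁ hx₁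
  have hnorm : ‖x₂ - x₁‖ = ‖x₁ - x₂‖ := by rw [norm_sub_rev]
  rw [hnorm] at h1
  have hin1 : ⟪f' x₁ + g' x₁, x₂ - x₁⟫ = ⟪f' x₁, x₂ - x₁⟫ + ⟪g' x₁, x₂ - x₁⟫ :=
    inner_add_left _ _ _
  -- combine: μ‖x₁-x₂‖² ≤ ⟪g' x₁, x₁ - x₂⟫
  have key : μ * ‖x₁ - x₂‖ ^ 2 ≤ ⟪g' x₁, x₁ - x₂⟫ := by
    have : ⟪g' x₁, x₁ - x₂⟫ = -⟪g' x₁, x₂ - x₁⟫ := by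
      rw [← inner_neg_right]; congr 1; abel
    rw [this]
    nlinarith [h1, h2, h3, h4, hin1]
  have hcs : ⟪g' x₁, x₁ - x₂⟫ ≤ ‖g' x₁‖ * ‖x₁ - x₂‖ := real_inner_le_norm _ _
  rcases eq_or_ne x₁ x₂ with h | h
  · simp [h]
    positivity
  · have hd : 0 < ‖x₁ - x₂‖ := by
      rw [norm_pos_iff, sub_ne_zero]; exact h
    rw [le_div_iff₀ hμ]
    have : μ * ‖x₁ - x₂‖ ^ 2 ≤ ‖g' x₁‖ * ‖x₁ - x₂‖ := key.trans hcs
    nlinarith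
end

section
/- For every real p > 0 and natural number N >= 1: sum_{n=1}^N n^{2p} / (sum_{m=1}^n m^p) <= ((p+1)/p) * (N+1)^p. -/
/-!
Both estimates are tangent-line (Bernoulli) inequalities for `x ↦ x ^ q`. Since
`m ^ (p + 1) - (m - 1) ^ (p + 1) ≤ (p + 1) * m ^ p`, telescoping gives
`∑_{m ≤ n} m ^ p ≥ n ^ (p + 1) / (p + 1)`, so the `n`-th term is at most `(p + 1) * n ^ (p - 1)`.
Then `p * n ^ (p - 1)` is at most the forward difference `(n + 1) ^ p - n ^ p` when `p ≥ 1`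
(convexity) and the backward difference `n ^ p - (n - 1) ^ p` when `p ≤ 1` (concavity); either way
`p * ∑_{n ≤ N} n ^ (p - 1)` telescopes to at most `(N + 1) ^ p`.
-/

open Finset

namespace Real

variable {q x h : ℝ}

theorem rpow_add_eq_rpow_mul_one_add_div_rpow (hx : 0 < x) (hxh : 0 ≤ x + h) :
    (x + h) ^ q = x ^ q * (1 + h / x) ^ q := by
  rw [← mul_rpow hx.le (by rw [one_add_div hx.ne']; positivity), mul_one_add,
    mul_div_cancel₀ _ hx.ne']

theorem rpow_mul_one_add_mul_div (hx : 0 < x) :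
    x ^ q * (1 + q * (h / x)) = x ^ q + q * x ^ (q - 1) * h := by
  rw [rpow_sub_one hx.ne']
  ring

theorem neg_one_le_div_of_nonneg_add (hx : 0 < x) (hxh : 0 ≤ x + h) : -1 ≤ h / x := by
  rw [le_div_iff₀ hx]
  linarith

theorem rpow_add_mul_rpow_sub_one_mul_le (hq : 1 ≤ q) (hx : 0 < x) (hxh : 0 ≤ x + h) :
    x ^ q + q * x ^ (q - 1) * h ≤ (x + h) ^ q := by
  rw [← rpow_mul_one_add_mul_div hx, rpow_add_eq_rpow_mul_one_add_div_rpow hx hxh]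
  exact mul_le_mul_of_nonneg_left
    (one_add_mul_self_le_rpow_one_add (neg_one_le_div_of_nonneg_add hx hxh) hq) (by positivity)

theorem rpow_add_le_rpow_add_mul_rpow_sub_one_mul (hq₀ : 0 ≤ q) (hq₁ : q ≤ 1) (hx : 0 < x)
    (hxh : 0 ≤ x + h) : (x + h) ^ q ≤ x ^ q + q * x ^ (q - 1) * h := by
  rw [← rpow_mul_one_add_mul_div hx, rpow_add_eq_rpow_mul_one_add_div_rpow hx hxh]
  exact mul_le_mul_of_nonneg_left
    (rpow_one_add_le_one_add_mul_self (neg_one_le_div_of_nonneg_add hx hxh) hq₀ hq₁)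
    (by positivity)

end Real

theorem Finset.sum_Icc_one_sub_sub {M : Type*} [AddCommGroup M] (g : ℕ → M) (N : ℕ) :
    ∑ n ∈ Icc 1 N, (g n - g (n - 1)) = g N - g 0 := by
  induction N with
  | zero => simp
  | succ N ih =>
    rw [sum_Icc_succ_top (by omega), ih, Nat.add_sub_cancel]
    abel

theorem rpow_add_one_div_le_sum_Icc_rpow {p : ℝ} (hp : 0 ≤ p) (n : ℕ) :
    (n : ℝ) ^ (p + 1) / (p + 1) ≤ ∑ m ∈ Icc 1 n, (m : ℝ) ^ p := by
  have hp1 : 0 < p + 1 := by linarith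
  have step : ∀ m ∈ Icc 1 n,
      (m : ℝ) ^ (p + 1) - ((m - 1 : ℕ) : ℝ) ^ (p + 1) ≤ (p + 1) * (m : ℝ) ^ p := by
    intro m hm
    have hm : (1 : ℝ) ≤ m := by exact_mod_cast (mem_Icc.1 hm).1
    have := Real.rpow_add_mul_rpow_sub_one_mul_le (q := p + 1) (x := m) (h := -1) (by linarith)
      (by linarith) (by linarith)
    rw [add_sub_cancel_right, ← sub_eq_add_neg] at this
    rw [Nat.cast_pred (by exact_mod_cast hm)]
    linarith
  calc (n : ℝ) ^ (p + 1) / (p + 1)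
      = (∑ m ∈ Icc 1 n, ((m : ℝ) ^ (p + 1) - ((m - 1 : ℕ) : ℝ) ^ (p + 1))) / (p + 1) := by
        rw [sum_Icc_one_sub_sub (fun m : ℕ => (m : ℝ) ^ (p + 1)), Nat.cast_zero,
          Real.zero_rpow hp1.ne', sub_zero]
    _ ≤ (∑ m ∈ Icc 1 n, (p + 1) * (m : ℝ) ^ p) / (p + 1) := by gcongr with m hm; exact step m hm
    _ = ∑ m ∈ Icc 1 n, (m : ℝ) ^ p := by rw [← mul_sum, mul_div_cancel_left₀ _ hp1.ne']

theorem rpow_two_mul_div_sum_Icc_rpow_le {p : ℝ} (hp : 0 ≤ p) {n : ℕ} (hn : 1 ≤ n) :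
    (n : ℝ) ^ (2 * p) / ∑ m ∈ Icc 1 n, (m : ℝ) ^ p ≤ (p + 1) * (n : ℝ) ^ (p - 1) := by
  have hn0 : (0 : ℝ) < n := by exact_mod_cast hn
  calc (n : ℝ) ^ (2 * p) / ∑ m ∈ Icc 1 n, (m : ℝ) ^ p
      ≤ (n : ℝ) ^ (2 * p) / ((n : ℝ) ^ (p + 1) / (p + 1)) :=
        div_le_div_of_nonneg_left (by positivity) (by positivity)
          (rpow_add_one_div_le_sum_Icc_rpow hp n)
    _ = (p + 1) * (n : ℝ) ^ (p - 1) := by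
        rw [show 2 * p = (p - 1) + (p + 1) by ring, Real.rpow_add hn0]
        field_simp

theorem mul_sum_Icc_rpow_sub_one_le {p : ℝ} (hp : 0 ≤ p) (N : ℕ) :
    p * ∑ n ∈ Icc 1 N, (n : ℝ) ^ (p - 1) ≤ ((N : ℝ) + 1) ^ p := by
  rw [mul_sum]
  rcases le_total 1 p with hp1 | hp1
  · have step : ∀ n ∈ Icc 1 N,
        p * (n : ℝ) ^ (p - 1) ≤ ((n : ℝ) + 1) ^ p - (((n - 1 : ℕ) : ℝ) + 1) ^ p := by
      intro n hn
      have hn : 1 ≤ n := (mem_Icc.1 hn).1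
      have := Real.rpow_add_mul_rpow_sub_one_mul_le (x := n) (h := 1) hp1
        (by exact_mod_cast hn) (by positivity)
      rw [Nat.cast_pred hn, sub_add_cancel]
      linarith
    calc ∑ n ∈ Icc 1 N, p * (n : ℝ) ^ (p - 1)
        ≤ ∑ n ∈ Icc 1 N, (((n : ℝ) + 1) ^ p - (((n - 1 : ℕ) : ℝ) + 1) ^ p) := sum_le_sum step
      _ = ((N : ℝ) + 1) ^ p - 1 := by
        rw [sum_Icc_one_sub_sub (fun n : ℕ => ((n : ℝ) + 1) ^ p)]
        simp
      _ ≤ ((N : ℝ) + 1) ^ p := by linarith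
  · have step : ∀ n ∈ Icc 1 N,
        p * (n : ℝ) ^ (p - 1) ≤ (n : ℝ) ^ p - ((n - 1 : ℕ) : ℝ) ^ p := by
      intro n hn
      have hn : (1 : ℝ) ≤ n := by exact_mod_cast (mem_Icc.1 hn).1
      have := Real.rpow_add_le_rpow_add_mul_rpow_sub_one_mul (x := n) (h := -1) hp hp1
        (by linarith) (by linarith)
      rw [← sub_eq_add_neg] at this
      rw [Nat.cast_pred (by exact_mod_cast hn)]
      linarith
    calc ∑ n ∈ Icc 1 N, p * (n : ℝ) ^ (p - 1)
        ≤ ∑ n ∈ Icc 1 N, ((n : ℝ) ^ p - ((n - 1 : ℕ) : ℝ) ^ p) := sum_le_sum step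
      _ = (N : ℝ) ^ p - (0 : ℝ) ^ p := by
        rw [sum_Icc_one_sub_sub (fun n : ℕ => (n : ℝ) ^ p), Nat.cast_zero]
      _ ≤ (N : ℝ) ^ p := sub_le_self _ (Real.rpow_nonneg le_rfl p)
      _ ≤ ((N : ℝ) + 1) ^ p := by gcongr; linarith

theorem sum_ratio_rpow_bound_general (p : ℝ) (hp : 0 < p) (N : ℕ) :
    ∑ n ∈ Icc 1 N, (n : ℝ) ^ (2 * p) / (∑ m ∈ Icc 1 n, (m : ℝ) ^ p) ≤
      ((p + 1) / p) * ((N : ℝ) + 1) ^ p := by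
  calc ∑ n ∈ Icc 1 N, (n : ℝ) ^ (2 * p) / (∑ m ∈ Icc 1 n, (m : ℝ) ^ p)
      ≤ ∑ n ∈ Icc 1 N, (p + 1) * (n : ℝ) ^ (p - 1) :=
        sum_le_sum fun n hn => rpow_two_mul_div_sum_Icc_rpow_le hp.le (mem_Icc.1 hn).1
    _ = (p + 1) / p * (p * ∑ n ∈ Icc 1 N, (n : ℝ) ^ (p - 1)) := by
        rw [← mul_sum]
        field_simp
    _ ≤ (p + 1) / p * ((N : ℝ) + 1) ^ p := by
        gcongr
        exact mul_sum_Icc_rpow_sub_one_le hp.le N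

/-- Bound on `∑ n^{2p} / ∑_{m ≤ n} m^p` for `p > 0`. -/
theorem sum_ratio_rpow_bound (p : ℝ) (hp : 0 < p) (N : ℕ) (hN : 1 ≤ N) :
    ∑ n ∈ Icc 1 N, (n : ℝ) ^ (2 * p) / (∑ m ∈ Icc 1 n, (m : ℝ) ^ p) ≤
      ((p + 1) / p) * ((N : ℝ) + 1) ^ p :=
  sum_ratio_rpow_bound_general p hp N
end

section
/- Let X be a compact convex subset of R^d and let each l_{1:n} = sum_{m=1}^n l_m be mu_{1:n}-strongly convex and differentiable with mu_{1:n} > 0. Let v_{n+1} be a function such that l_{1:n} + v_{n+1} is convex and differentiable, and suppose x_{n+1} minimizes l_{1:n} + v_{n+1} over X (with x_1 minimizing v_1, taking l_{1:0} = 0). Then sum_{n=1}^N (l_{1:n}(x_n) - l_{1:n}(x_n^*)) <= sum_{n=1}^N (1/(2 mu_{1:n})) * ||grad l_n(x_n) - grad v_n(x_n)||_*^2, where x_n^* minimizes l_{1:n} over X. -/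
open Finset RealInnerProductSpace

/-- Stabilization bound for FTL with prediction (regret addon lemma). -/
theorem ftl_with_prediction_stabilization {d : ℕ} (N : ℕ)
    (X : Set (EuclideanSpace ℝ (Fin d))) (hXc : IsCompact X) (hXconv : Convex ℝ X)
    (l v : ℕ → EuclideanSpace ℝ (Fin d) → ℝ)
    (gl gv : ℕ → EuclideanSpace ℝ (Fin d) → EuclideanSpace ℝ (Fin d))
    (μ : ℕ → ℝ) (hμ : ∀ n ∈ Icc 1 N, 0 < μ n)
    (x xstar : ℕ → EuclideanSpace ℝ (Fin d))
    (hx : ∀ n ∈ Icc 1 N, x n ∈ X) (hxstar : ∀ n ∈ Icc 1 N, xstar n ∈ X)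
    -- `l_{1:n}` is `μ n`-strongly convex with gradient `∑ gl m`
    (hstrong : ∀ n ∈ Icc 1 N, ∀ a ∈ X, ∀ b ∈ X,
      (∑ m ∈ Icc 1 n, l m a) + ⟪∑ m ∈ Icc 1 n, gl m a, b - a⟫ +
        μ n / 2 * ‖b - a‖ ^ 2 ≤ ∑ m ∈ Icc 1 n, l m b)
    -- `x (n+1)` minimizes `l_{1:n} + v (n+1)` over `X` (first-order optimality)
    (hopt : ∀ n, n + 1 ≤ N → ∀ y ∈ X,
      0 ≤ ⟪(∑ m ∈ Icc 1 n, gl m (x (n + 1))) + gv (n + 1) (x (n + 1)),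
            y - x (n + 1)⟫)
    -- `xstar n` minimizes `l_{1:n}` over `X`
    (hmin : ∀ n ∈ Icc 1 N, ∀ y ∈ X,
      (∑ m ∈ Icc 1 n, l m (xstar n)) ≤ ∑ m ∈ Icc 1 n, l m y) :
    ∑ n ∈ Icc 1 N,
        ((∑ m ∈ Icc 1 n, l m (x n)) - ∑ m ∈ Icc 1 n, l m (xstar n)) ≤
      ∑ n ∈ Icc 1 N, 1 / (2 * μ n) * ‖gl n (x n) - gv n (x n)‖ ^ 2 := by

  apply Finset.sum_le_sum
  intro n hn
  obtain ⟨h1, h2⟩ := mem_Icc.mp hn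
  obtain ⟨k, rfl⟩ : ∃ k, n = k + 1 := ⟨n - 1, by omega⟩
  set a := x (k + 1) with ha
  set b := xstar (k + 1) with hb
  have hsX := hstrong (k + 1) hn a (hx _ hn) b (hxstar _ hn)
  have hoptk := hopt k (by omega) b (hxstar _ hn)
  have hsum : ∑ m ∈ Icc 1 (k + 1), gl m a = (∑ m ∈ Icc 1 k, gl m a) + gl (k + 1) a :=
    Finset.sum_Icc_succ_top (by omega) _
  rw [hsum] at hsX
  set G := ∑ m ∈ Icc 1 k, gl m a with hG
  set g := gl (k + 1) a - gv (k + 1) a with hg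
  have hinner : ⟪G + gl (k + 1) a, b - a⟫ = ⟪G + gv (k + 1) a, b - a⟫ + ⟪g, b - a⟫ := by
    simp [hg, inner_add_left, inner_sub_left]
  have hcs : -⟪g, b - a⟫ ≤ ‖g‖ * ‖b - a‖ := by
    have := abs_real_inner_le_norm g (b - a)
    cases abs_cases ⟪g, b - a⟫ with
    | inl h => linarith [real_inner_le_norm g (b - a)]
    | inr h => linarith
  have hμn := hμ (k + 1) hn
  have hg2 : (0:ℝ) ≤ ‖g‖ := norm_nonneg _
  have hd2 : (0:ℝ) ≤ ‖b - a‖ := norm_nonneg _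
  have key : ‖g‖ * ‖b - a‖ - μ (k + 1) / 2 * ‖b - a‖ ^ 2 ≤
      1 / (2 * μ (k + 1)) * ‖g‖ ^ 2 := by
    rw [one_div, inv_mul_eq_div, le_div_iff₀ (by linarith)]
    nlinarith [sq_nonneg (‖g‖ - μ (k + 1) * ‖b - a‖)]
  linarith
end

section
/- Let l_1,...,l_N be differentiable mu-strongly convex functions on a compact convex set X with gradients bounded by G (||grad l_n(x)||_* <= G for all x in X), let w_n > 0 be weights, and suppose the learner plays weighted FTL: x_1 is arbitrary and x_n minimizes sum_{m=1}^{n-1} w_m l_m over X, i.e. x_{n+1} = argmin_{x in X} sum_{m=1}^n w_m l_m(x). Then the weighted regret sum_{n=1}^N w_n l_n(x_n) - min_{x in X} sum_{n=1}^N w_n l_n(x) is at most (G^2/(2 mu)) * sum_{n=1}^N w_n^2 / (sum_{m=1}^n w_m). -/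
open Finset RealInnerProductSpace

/-- Weighted FTL regret bound for strongly convex losses with bounded gradients. -/
theorem weighted_ftl_regret {d : ℕ} (N : ℕ)
    (X : Set (EuclideanSpace ℝ (Fin d))) (hXc : IsCompact X) (hXconv : Convex ℝ X)
    (l : ℕ → EuclideanSpace ℝ (Fin d) → ℝ)
    (gl : ℕ → EuclideanSpace ℝ (Fin d) → EuclideanSpace ℝ (Fin d))
    (μ G : ℝ) (hμ : 0 < μ)
    (w : ℕ → ℝ) (hw : ∀ n, 0 < w n)
    (x : ℕ → EuclideanSpace ℝ (Fin d)) (hx : ∀ n ∈ Icc 1 N, x n ∈ X)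
    -- each `l n` is `μ`-strongly convex on `X` with gradient `gl n`
    (hstrong : ∀ n ∈ Icc 1 N, ∀ a ∈ X, ∀ b ∈ X,
      l n a + ⟪gl n a, b - a⟫ + μ / 2 * ‖b - a‖ ^ 2 ≤ l n b)
    -- gradient bound
    (hG : ∀ n ∈ Icc 1 N, ∀ a ∈ X, ‖gl n a‖ ≤ G)
    -- `x (n+1)` minimizes `∑_{m ≤ n} w m * l m` over `X`
    (hftl : ∀ n, n + 1 ≤ N → ∀ y ∈ X,
      (∑ m ∈ Icc 1 n, w m * l m (x (n + 1))) ≤ ∑ m ∈ Icc 1 n, w m * l m y)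
    -- first-order optimality of the FTL iterate
    (hopt : ∀ n, n + 1 ≤ N → ∀ y ∈ X,
      0 ≤ ⟪∑ m ∈ Icc 1 n, w m • gl m (x (n + 1)), y - x (n + 1)⟫) :
    ∀ y ∈ X,
      (∑ n ∈ Icc 1 N, w n * l n (x n)) - (∑ n ∈ Icc 1 N, w n * l n y) ≤
        G ^ 2 / (2 * μ) * ∑ n ∈ Icc 1 N, w n ^ 2 / (∑ m ∈ Icc 1 n, w m) := by
  revert hx hstrong hG hftl hopt
  induction N with
  | zero => intros; simp
  | succ N ih =>
    intro hx hstrong hG hftl hopt y hy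
    have hsub : Icc 1 N ⊆ Icc 1 (N + 1) := Icc_subset_Icc_right (by omega)
    have hx1 : x (N + 1) ∈ X := hx (N + 1) (by simp)
    set x' := x (N + 1) with hx'
    have hG0 : 0 ≤ G := le_trans (norm_nonneg _) (hG (N + 1) (by simp) x' hx1)
    have IH := ih (fun n hn => hx n (hsub hn)) (fun n hn => hstrong n (hsub hn))
      (fun n hn => hG n (hsub hn)) (fun n hn => hftl n (by omega))
      (fun n hn => hopt n (by omega)) x' hx1
    -- weight sum
    set W := ∑ m ∈ Icc 1 (N + 1), w m with hWdef
    have hW : 0 < W := Finset.sum_pos (fun m _ => hw m) (by simp)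
    set r := ‖y - x'‖ with hrdef
    have hr0 : 0 ≤ r := norm_nonneg _
    -- summed strong convexity
    have sc : (∑ m ∈ Icc 1 (N + 1), w m * l m x')
        + ⟪∑ m ∈ Icc 1 (N + 1), w m • gl m x', y - x'⟫
        + μ / 2 * W * r ^ 2 ≤ ∑ m ∈ Icc 1 (N + 1), w m * l m y := by
      have hsum3 : μ / 2 * W * r ^ 2 = ∑ m ∈ Icc 1 (N + 1), μ / 2 * w m * r ^ 2 := by
        rw [hWdef, Finset.mul_sum, Finset.sum_mul]
      rw [sum_inner, hsum3, ← Finset.sum_add_distrib, ← Finset.sum_add_distrib]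
      refine Finset.sum_le_sum fun m hm => ?_
      rw [real_inner_smul_left]
      have h := hstrong m hm x' hx1 y hy
      nlinarith [h, (hw m)]
    -- split off the gradient sum
    have hgsplit : ⟪∑ m ∈ Icc 1 (N + 1), w m • gl m x', y - x'⟫
        = ⟪∑ m ∈ Icc 1 N, w m • gl m x', y - x'⟫ + w (N + 1) * ⟪gl (N + 1) x', y - x'⟫ := by
      rw [Finset.sum_Icc_succ_top (by omega : 1 ≤ N + 1), inner_add_left, real_inner_smul_left]
    have hop : 0 ≤ ⟪∑ m ∈ Icc 1 N, w m • gl m x', y - x'⟫ := hopt N (by omega) y hy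
    have hcs : -(G * r) ≤ ⟪gl (N + 1) x', y - x'⟫ := by
      have h1 := abs_real_inner_le_norm (gl (N + 1) x') (y - x')
      have h2 := hG (N + 1) (by simp) x' hx1
      have h3 := neg_abs_le ⟪gl (N + 1) x', y - x'⟫
      nlinarith [norm_nonneg (gl (N + 1) x'), hr0]
    -- per-step bound
    have key : (∑ m ∈ Icc 1 (N + 1), w m * l m x') - (∑ m ∈ Icc 1 (N + 1), w m * l m y)
        ≤ G ^ 2 / (2 * μ) * (w (N + 1) ^ 2 / W) := by
      have hstep : (∑ m ∈ Icc 1 (N + 1), w m * l m x') - (∑ m ∈ Icc 1 (N + 1), w m * l m y)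
          ≤ w (N + 1) * (G * r) - μ / 2 * W * r ^ 2 := by
        have := hw (N + 1)
        nlinarith [sc, hgsplit, hop, hcs]
      have hfin : w (N + 1) * (G * r) - μ / 2 * W * r ^ 2
          ≤ G ^ 2 / (2 * μ) * (w (N + 1) ^ 2 / W) := by
        rw [div_mul_div_comm, le_div_iff₀ (by positivity : (0:ℝ) < 2 * μ * W)]
        nlinarith [sq_nonneg (μ * W * r - w (N + 1) * G), hμ, hW]
      linarith
    -- combine
    rw [Finset.sum_Icc_succ_top (by omega : 1 ≤ N + 1),
        Finset.sum_Icc_succ_top (by omega : 1 ≤ N + 1),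
        Finset.sum_Icc_succ_top (by omega : 1 ≤ N + 1) (f := fun n => w n ^ 2 / ∑ m ∈ Icc 1 n, w m)]
    have hsplit2 : ∑ m ∈ Icc 1 (N + 1), w m * l m x'
        = (∑ m ∈ Icc 1 N, w m * l m x') + w (N + 1) * l (N + 1) x' := by
      rw [Finset.sum_Icc_succ_top (by omega : 1 ≤ N + 1)]
    rw [mul_add]
    have : (∑ m ∈ Icc 1 N, w m * l m x') + w (N + 1) * l (N + 1) x'
        - (∑ m ∈ Icc 1 (N + 1), w m * l m y)
        ≤ G ^ 2 / (2 * μ) * (w (N + 1) ^ 2 / W) := by rw [← hsplit2]; exact key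
    have hylast : ∑ m ∈ Icc 1 (N + 1), w m * l m y
        = (∑ m ∈ Icc 1 N, w m * l m y) + w (N + 1) * l (N + 1) y := by
      rw [Finset.sum_Icc_succ_top (by omega : 1 ≤ N + 1)]
    rw [hylast] at this
    linarith
end

section
/- With weights w_n = n^p for p >= 0 and per-round losses l_n that are mu-strongly convex with gradients bounded by G, weighted FTL achieves weighted regret at most ((p+1) G^2 / (2 mu)) * sum_{n=1}^N n^{p-1}. In particular for p = 0 the regret is at most (G^2/(2 mu)) (ln N + 1), and for p > 0 it is at most (G^2/(2 mu)) * ((p+1)/p) * (N+1)^p. -/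
open Finset RealInnerProductSpace

lemma quad_bound_aux {a c t : ℝ} (hc : 0 < c) : a * t - c / 2 * t ^ 2 ≤ a ^ 2 / (2 * c) := by
  rw [le_div_iff₀ (by linarith : (0:ℝ) < 2 * c)]
  nlinarith [sq_nonneg (a - c * t)]

lemma tangent_rpow_le {q a b : ℝ} (hq : 1 ≤ q) (ha : 0 ≤ a) (hb : 0 < b) :
    b ^ q + q * b ^ (q - 1) * (a - b) ≤ a ^ q := by
  have hs : (-1 : ℝ) ≤ a / b - 1 := by
    have := div_nonneg ha hb.le; linarith
  have h := one_add_mul_self_le_rpow_one_add hs hq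
  have he : (1 : ℝ) + (a / b - 1) = a / b := by ring
  rw [he, Real.div_rpow ha hb.le] at h
  have hbq : (0:ℝ) < b ^ q := Real.rpow_pos_of_pos hb q
  have h1 : b ^ q / b = b ^ (q - 1) := by
    rw [Real.rpow_sub hb, Real.rpow_one]
  calc b ^ q + q * b ^ (q - 1) * (a - b)
      = b ^ q * (1 + q * (a / b - 1)) := by
        rw [← h1]; field_simp
    _ ≤ b ^ q * (a ^ q / b ^ q) := by
        exact mul_le_mul_of_nonneg_left h hbq.le
    _ = a ^ q := by field_simp

lemma tangent_rpow_ge {q a b : ℝ} (hq0 : 0 ≤ q) (hq : q ≤ 1) (ha : 0 ≤ a) (hb : 0 < b) :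
    a ^ q ≤ b ^ q + q * b ^ (q - 1) * (a - b) := by
  have hs : (-1 : ℝ) ≤ a / b - 1 := by
    have := div_nonneg ha hb.le; linarith
  have h := rpow_one_add_le_one_add_mul_self hs hq0 hq
  have he : (1 : ℝ) + (a / b - 1) = a / b := by ring
  rw [he, Real.div_rpow ha hb.le] at h
  have hbq : (0:ℝ) < b ^ q := Real.rpow_pos_of_pos hb q
  have h1 : b ^ q / b = b ^ (q - 1) := by
    rw [Real.rpow_sub hb, Real.rpow_one]
  calc a ^ q = b ^ q * (a ^ q / b ^ q) := by field_simp
    _ ≤ b ^ q * (1 + q * (a / b - 1)) := mul_le_mul_of_nonneg_left h hbq.le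
    _ = b ^ q + q * b ^ (q - 1) * (a - b) := by rw [← h1]; field_simp

lemma sumA {p : ℝ} (hp : 0 ≤ p) (m : ℕ) :
    (m : ℝ) ^ (p + 1) / (p + 1) ≤ ∑ k ∈ Icc 1 m, (k : ℝ) ^ p := by
  induction m with
  | zero => simp [Real.zero_rpow (by positivity : p + 1 ≠ 0)]
  | succ m ih =>
    rw [Finset.sum_Icc_succ_top (by omega : 1 ≤ m + 1)]
    have hb : (0:ℝ) < (m : ℝ) + 1 := by positivity
    have h := tangent_rpow_le (q := p + 1) (a := (m:ℝ)) (b := (m:ℝ) + 1)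
      (by linarith) (by positivity) hb
    rw [add_sub_cancel_right] at h
    have hp1 : (0:ℝ) < p + 1 := by linarith
    have key : ((m:ℝ) + 1) ^ (p + 1) / (p + 1) ≤ (m:ℝ) ^ (p+1) / (p+1) + ((m:ℝ)+1) ^ p := by
      rw [div_add' _ _ _ hp1.ne', div_le_div_iff_of_pos_right hp1]
      nlinarith
    push_cast
    linarith

lemma sumB {p : ℝ} (hp : 1 ≤ p) (N : ℕ) :
    ∑ n ∈ Icc 1 N, (n : ℝ) ^ (p - 1) ≤ (((N : ℝ) + 1) ^ p - 1) / p := by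
  have hp0 : (0:ℝ) < p := by linarith
  induction N with
  | zero => simp [Real.one_rpow]
  | succ N ih =>
    rw [Finset.sum_Icc_succ_top (by omega : 1 ≤ N + 1)]
    have hb : (0:ℝ) < (N : ℝ) + 1 := by positivity
    have h := tangent_rpow_le (q := p) (a := (N:ℝ) + 2) (b := (N:ℝ) + 1)
      hp (by positivity) hb
    have key : ((N:ℝ)+1) ^ (p-1) ≤ (((N:ℝ)+2) ^ p - ((N:ℝ)+1) ^ p) / p := by
      rw [le_div_iff₀ hp0]; nlinarith
    have he : (((N:ℝ)+2) ^ p - 1)/p - (((N:ℝ)+1) ^ p - 1)/p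
        = (((N:ℝ)+2) ^ p - ((N:ℝ)+1) ^ p) / p := by ring
    push_cast
    rw [show ((N:ℝ) + 1 + 1) = (N:ℝ) + 2 by ring]
    linarith

lemma sumC {p : ℝ} (hp0 : 0 < p) (hp : p ≤ 1) (N : ℕ) :
    ∑ n ∈ Icc 1 N, (n : ℝ) ^ (p - 1) ≤ (N : ℝ) ^ p / p := by
  induction N with
  | zero => simp [Real.zero_rpow hp0.ne']
  | succ N ih =>
    rw [Finset.sum_Icc_succ_top (by omega : 1 ≤ N + 1)]
    have hb : (0:ℝ) < (N : ℝ) + 1 := by positivity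
    have h := tangent_rpow_ge (q := p) (a := (N:ℝ)) (b := (N:ℝ) + 1)
      hp0.le hp (by positivity) hb
    have key : ((N:ℝ)+1) ^ (p-1) ≤ (((N:ℝ)+1) ^ p - (N:ℝ) ^ p) / p := by
      rw [le_div_iff₀ hp0]; nlinarith
    have he : (((N:ℝ)+1) ^ p)/p - ((N:ℝ) ^ p)/p
        = (((N:ℝ)+1) ^ p - (N:ℝ) ^ p) / p := by ring
    push_cast
    linarith

/-- Weighted FTL with polynomial weights `w n = n^p`, `p ≥ 0`. -/
theorem weighted_ftl_regret_poly {d : ℕ} (N : ℕ) (hN : 1 ≤ N)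
    (X : Set (EuclideanSpace ℝ (Fin d))) (hXc : IsCompact X) (hXconv : Convex ℝ X)
    (l : ℕ → EuclideanSpace ℝ (Fin d) → ℝ)
    (gl : ℕ → EuclideanSpace ℝ (Fin d) → EuclideanSpace ℝ (Fin d))
    (μ G : ℝ) (hμ : 0 < μ) (p : ℝ) (hp : 0 ≤ p)
    (x : ℕ → EuclideanSpace ℝ (Fin d)) (hx : ∀ n ∈ Icc 1 N, x n ∈ X)
    -- each `l n` is `μ`-strongly convex on `X` with gradient `gl n`
    (hstrong : ∀ n ∈ Icc 1 N, ∀ a ∈ X, ∀ b ∈ X,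
      l n a + ⟪gl n a, b - a⟫ + μ / 2 * ‖b - a‖ ^ 2 ≤ l n b)
    -- gradient bound
    (hG : ∀ n ∈ Icc 1 N, ∀ a ∈ X, ‖gl n a‖ ≤ G)
    -- `x (n+1)` minimizes `∑_{m ≤ n} m^p * l m` over `X`
    (hftl : ∀ n, n + 1 ≤ N → ∀ y ∈ X,
      (∑ m ∈ Icc 1 n, (m : ℝ) ^ p * l m (x (n + 1))) ≤
        ∑ m ∈ Icc 1 n, (m : ℝ) ^ p * l m y)
    -- first-order optimality of the FTL iterate
    (hopt : ∀ n, n + 1 ≤ N → ∀ y ∈ X,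
      0 ≤ ⟪∑ m ∈ Icc 1 n, (m : ℝ) ^ p • gl m (x (n + 1)), y - x (n + 1)⟫) :
    ∀ y ∈ X,
      ((∑ n ∈ Icc 1 N, (n : ℝ) ^ p * l n (x n)) -
          (∑ n ∈ Icc 1 N, (n : ℝ) ^ p * l n y) ≤
        (p + 1) * G ^ 2 / (2 * μ) * ∑ n ∈ Icc 1 N, (n : ℝ) ^ (p - 1)) ∧
      (p = 0 →
        (∑ n ∈ Icc 1 N, (n : ℝ) ^ p * l n (x n)) -
            (∑ n ∈ Icc 1 N, (n : ℝ) ^ p * l n y) ≤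
          G ^ 2 / (2 * μ) * (Real.log N + 1)) ∧
      (0 < p →
        (∑ n ∈ Icc 1 N, (n : ℝ) ^ p * l n (x n)) -
            (∑ n ∈ Icc 1 N, (n : ℝ) ^ p * l n y) ≤
          G ^ 2 / (2 * μ) * ((p + 1) / p) * ((N : ℝ) + 1) ^ p) := by
  have hX1 : x 1 ∈ X := hx 1 (mem_Icc.mpr ⟨le_refl 1, hN⟩)
  have hG0 : 0 ≤ G := le_trans (norm_nonneg _) (hG 1 (mem_Icc.mpr ⟨le_refl 1, hN⟩) (x 1) hX1)
  have hWpos : ∀ n : ℕ, 1 ≤ n → (0:ℝ) < ∑ m ∈ Icc 1 n, (m : ℝ) ^ p := by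
    intro n hn
    apply Finset.sum_pos'
    · intro i _; positivity
    · exact ⟨1, mem_Icc.mpr ⟨le_refl 1, hn⟩, by
        have : ((1:ℕ):ℝ) ^ p = 1 := by norm_num
        rw [this]; norm_num⟩
  -- per-step key inequality
  have key : ∀ k : ℕ, k + 1 ≤ N → ∀ z ∈ X,
      (∑ m ∈ Icc 1 (k+1), (m:ℝ)^p * l m (x (k+1))) - (∑ m ∈ Icc 1 (k+1), (m:ℝ)^p * l m z)
        ≤ (((k+1:ℕ):ℝ)^p)^2 * G^2 / (2 * (μ * ∑ m ∈ Icc 1 (k+1), (m:ℝ)^p)) := by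
    intro k hkN z hz
    have hxn : x (k+1) ∈ X := hx _ (mem_Icc.mpr ⟨Nat.le_add_left 1 k, hkN⟩)
    set t : ℝ := ‖z - x (k+1)‖ with ht
    have h1 : ∀ m ∈ Icc 1 (k+1),
        (m:ℝ)^p * l m (x (k+1)) + ⟪(m:ℝ)^p • gl m (x (k+1)), z - x (k+1)⟫
          + (m:ℝ)^p * (μ / 2 * t^2) ≤ (m:ℝ)^p * l m z := by
      intro m hm
      have hmN : m ∈ Icc 1 N := mem_Icc.mpr ⟨(mem_Icc.mp hm).1, le_trans (mem_Icc.mp hm).2 hkN⟩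
      have hw : (0:ℝ) ≤ (m:ℝ)^p := Real.rpow_nonneg (Nat.cast_nonneg m) p
      have h := mul_le_mul_of_nonneg_left (hstrong m hmN (x (k+1)) hxn z hz) hw
      rw [real_inner_smul_left]
      rw [mul_add, mul_add] at h
      exact h
    have h2 := Finset.sum_le_sum h1
    rw [Finset.sum_add_distrib, Finset.sum_add_distrib, ← sum_inner, ← Finset.sum_mul] at h2
    have hsplit : (∑ m ∈ Icc 1 (k+1), (m:ℝ)^p • gl m (x (k+1)))
        = (∑ m ∈ Icc 1 k, (m:ℝ)^p • gl m (x (k+1))) + ((k+1:ℕ):ℝ)^p • gl (k+1) (x (k+1)) :=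
      Finset.sum_Icc_succ_top (Nat.le_add_left 1 k) _
    have hip1 : 0 ≤ ⟪∑ m ∈ Icc 1 k, (m:ℝ)^p • gl m (x (k+1)), z - x (k+1)⟫ :=
      hopt k hkN z hz
    have hglb : ‖gl (k+1) (x (k+1))‖ ≤ G := hG (k+1) (mem_Icc.mpr ⟨Nat.le_add_left 1 k, hkN⟩) _ hxn
    have hip2 : -(((k+1:ℕ):ℝ)^p * G * t) ≤ ⟪((k+1:ℕ):ℝ)^p • gl (k+1) (x (k+1)), z - x (k+1)⟫ := by
      rw [real_inner_smul_left]
      have hw : (0:ℝ) ≤ ((k+1:ℕ):ℝ)^p := Real.rpow_nonneg (Nat.cast_nonneg _) p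
      have hcs : |⟪gl (k+1) (x (k+1)), z - x (k+1)⟫| ≤ ‖gl (k+1) (x (k+1))‖ * t :=
        abs_real_inner_le_norm _ _
      have h3 : -(G * t) ≤ ⟪gl (k+1) (x (k+1)), z - x (k+1)⟫ := by
        have := neg_abs_le ⟪gl (k+1) (x (k+1)), z - x (k+1)⟫
        have h4 : ‖gl (k+1) (x (k+1))‖ * t ≤ G * t :=
          mul_le_mul_of_nonneg_right hglb (norm_nonneg _)
        linarith
      calc -(((k+1:ℕ):ℝ)^p * G * t) = ((k+1:ℕ):ℝ)^p * (-(G * t)) := by ring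
        _ ≤ ((k+1:ℕ):ℝ)^p * ⟪gl (k+1) (x (k+1)), z - x (k+1)⟫ :=
            mul_le_mul_of_nonneg_left h3 hw
    rw [hsplit, inner_add_left] at h2
    have hW := hWpos (k+1) (Nat.le_add_left 1 k)
    have hq := quad_bound_aux (a := ((k+1:ℕ):ℝ)^p * G)
      (c := μ * ∑ m ∈ Icc 1 (k+1), (m:ℝ)^p) (t := t) (by positivity)
    have heq : (((k+1:ℕ):ℝ)^p * G)^2 = (((k+1:ℕ):ℝ)^p)^2 * G^2 := by ring
    rw [heq] at hq
    have hrw : (∑ m ∈ Icc 1 (k+1), (m:ℝ)^p) * (μ / 2 * t^2)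
        = (μ * ∑ m ∈ Icc 1 (k+1), (m:ℝ)^p) / 2 * t^2 := by ring
    rw [hrw] at h2
    linarith
  -- regret bound by induction
  have main : ∀ n, n ≤ N → ∀ z ∈ X,
      (∑ m ∈ Icc 1 n, (m:ℝ)^p * l m (x m)) - (∑ m ∈ Icc 1 n, (m:ℝ)^p * l m z)
        ≤ ∑ m ∈ Icc 1 n, ((m:ℝ)^p)^2 * G^2 / (2 * (μ * ∑ j ∈ Icc 1 m, (j:ℝ)^p)) := by
    intro n
    induction n with
    | zero => intro _ z hz; simp
    | succ k ih =>
      intro hkN z hz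
      have hk : k ≤ N := Nat.le_of_succ_le hkN
      have hxk1 : x (k+1) ∈ X := hx _ (mem_Icc.mpr ⟨Nat.le_add_left 1 k, hkN⟩)
      have h1 := ih hk (x (k+1)) hxk1
      have h2 := key k hkN z hz
      rw [Finset.sum_Icc_succ_top (Nat.le_add_left 1 k),
        Finset.sum_Icc_succ_top (Nat.le_add_left 1 k),
        Finset.sum_Icc_succ_top (Nat.le_add_left 1 k)]
      rw [Finset.sum_Icc_succ_top (Nat.le_add_left 1 k),
        Finset.sum_Icc_succ_top (Nat.le_add_left 1 k)] at h2
      linarith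
  -- termwise bound on the per-step quantities
  have hB : ∀ m ∈ Icc 1 N,
      ((m:ℝ)^p)^2 * G^2 / (2 * (μ * ∑ j ∈ Icc 1 m, (j:ℝ)^p))
        ≤ (p + 1) * G^2 / (2 * μ) * (m:ℝ)^(p-1) := by
    intro m hm
    have hm1 : 1 ≤ m := (mem_Icc.mp hm).1
    have hm0 : (0:ℝ) < (m:ℝ) := by exact_mod_cast Nat.lt_of_lt_of_le Nat.zero_lt_one hm1
    have hA : (0:ℝ) < (m:ℝ)^(p+1) := Real.rpow_pos_of_pos hm0 _
    have hAle := sumA hp m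
    have hW := hWpos m hm1
    have hp1 : (0:ℝ) < p + 1 := by linarith
    have step1 : ((m:ℝ)^p)^2 * G^2 / (2 * (μ * ∑ j ∈ Icc 1 m, (j:ℝ)^p))
        ≤ ((m:ℝ)^p)^2 * G^2 / (2 * (μ * ((m:ℝ)^(p+1)/(p+1)))) := by
      gcongr
    have step2 : ((m:ℝ)^p)^2 * G^2 / (2 * (μ * ((m:ℝ)^(p+1)/(p+1))))
        = (p + 1) * G^2 / (2 * μ) * (((m:ℝ)^p)^2 / (m:ℝ)^(p+1)) := by
      field_simp
    have e1 : ((m:ℝ)^p)^2 = (m:ℝ)^(p*2) := by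
      rw [← Real.rpow_natCast ((m:ℝ)^p) 2, ← Real.rpow_mul hm0.le]
      norm_num
    have e2 : (m:ℝ)^(p*2) / (m:ℝ)^(p+1) = (m:ℝ)^(p-1) := by
      rw [← Real.rpow_sub hm0]
      congr 1
      ring
    rw [e1, e2] at step2
    rw [e1] at step1
    rw [e1]
    linarith
  intro y hy
  have part1 : (∑ n ∈ Icc 1 N, (n : ℝ) ^ p * l n (x n)) -
      (∑ n ∈ Icc 1 N, (n : ℝ) ^ p * l n y) ≤
      (p + 1) * G ^ 2 / (2 * μ) * ∑ n ∈ Icc 1 N, (n : ℝ) ^ (p - 1) := by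
    calc (∑ n ∈ Icc 1 N, (n : ℝ) ^ p * l n (x n)) - (∑ n ∈ Icc 1 N, (n : ℝ) ^ p * l n y)
        ≤ ∑ m ∈ Icc 1 N, ((m:ℝ)^p)^2 * G^2 / (2 * (μ * ∑ j ∈ Icc 1 m, (j:ℝ)^p)) :=
          main N le_rfl y hy
      _ ≤ ∑ m ∈ Icc 1 N, (p + 1) * G^2 / (2 * μ) * (m:ℝ)^(p-1) := Finset.sum_le_sum hB
      _ = (p + 1) * G ^ 2 / (2 * μ) * ∑ n ∈ Icc 1 N, (n : ℝ) ^ (p - 1) := by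
          rw [Finset.mul_sum]
  refine ⟨part1, ?_, ?_⟩
  · intro hp0
    subst hp0
    have hsum : ∑ n ∈ Icc 1 N, (n : ℝ) ^ ((0:ℝ) - 1) ≤ Real.log N + 1 := by
      have hh := harmonic_le_one_add_log N
      have hcast : ((harmonic N : ℚ) : ℝ) = ∑ m ∈ Icc 1 N, ((m:ℝ))⁻¹ := by
        rw [harmonic_eq_sum_Icc]
        push_cast
        ring
      have hrw : ∑ n ∈ Icc 1 N, (n : ℝ) ^ ((0:ℝ) - 1) = ∑ m ∈ Icc 1 N, ((m:ℝ))⁻¹ := by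
        apply Finset.sum_congr rfl
        intro n _
        rw [zero_sub, Real.rpow_neg_one]
      rw [hrw, ← hcast]
      linarith
    have hc : (0:ℝ) ≤ G^2 / (2*μ) := by positivity
    calc (∑ n ∈ Icc 1 N, (n : ℝ) ^ (0:ℝ) * l n (x n)) -
          (∑ n ∈ Icc 1 N, (n : ℝ) ^ (0:ℝ) * l n y)
        ≤ ((0:ℝ) + 1) * G ^ 2 / (2 * μ) * ∑ n ∈ Icc 1 N, (n : ℝ) ^ ((0:ℝ) - 1) := part1
      _ = G^2 / (2*μ) * ∑ n ∈ Icc 1 N, (n : ℝ) ^ ((0:ℝ) - 1) := by ring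
      _ ≤ G^2 / (2*μ) * (Real.log N + 1) := mul_le_mul_of_nonneg_left hsum hc
  · intro hp0
    have hsum : ∑ n ∈ Icc 1 N, (n : ℝ) ^ (p - 1) ≤ ((N:ℝ) + 1) ^ p / p := by
      rcases le_or_gt p 1 with hple | hpgt
      · have h1 := sumC hp0 hple N
        have h2 : (N:ℝ)^p ≤ ((N:ℝ)+1)^p :=
          Real.rpow_le_rpow (Nat.cast_nonneg N) (by linarith) hp
        have h3 : (N:ℝ)^p / p ≤ ((N:ℝ)+1)^p / p := by gcongr
        linarith
      · have h1 := sumB hpgt.le N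
        have h2 : (((N:ℝ)+1)^p - 1) / p ≤ ((N:ℝ)+1)^p / p := by
          gcongr
          linarith
        linarith
    have hc : (0:ℝ) ≤ (p+1) * G^2 / (2*μ) := by positivity
    calc (∑ n ∈ Icc 1 N, (n : ℝ) ^ p * l n (x n)) -
          (∑ n ∈ Icc 1 N, (n : ℝ) ^ p * l n y)
        ≤ (p + 1) * G ^ 2 / (2 * μ) * ∑ n ∈ Icc 1 N, (n : ℝ) ^ (p - 1) := part1
      _ ≤ (p + 1) * G ^ 2 / (2 * μ) * (((N:ℝ) + 1) ^ p / p) := mul_le_mul_of_nonneg_left hsum hc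
      _ = G ^ 2 / (2 * μ) * ((p + 1) / p) * ((N : ℝ) + 1) ^ p := by
          ring
end
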